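/- arXiv:2506.14413 — 10 statements merged into one kernel-verified Lean document; each statement's English description precedes it below -/
import Mathlib

section
/- Let R be a profile of reaction functions for a finite game such that the associated dependency graph is acyclic (there is an edge from i to j whenever player i's reaction function R_i is not constant in player j's action). Then R has exactly one fixed point, i.e., there is exactly one action profile a with R_i(a_{-i}) = a_i for every player i. -/
/-- A reaction function for player `i` must not depend on `i`'s own coordinate:
it is a function of the actions `a_{-i}` of the other players. -/
def IndepOf {ι : Type*} {A : ι → Type*} (i : ι) (f : (∀ j, A j) → A i) : Prop :=
  ∀ a b : ∀ j, A j, (∀ j, j ≠ i → a j = b j) → f a = f b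

/-- The set of fixed points (executable outcomes) of a profile of reaction functions. -/
def FixedPts {ι : Type*} {A : ι → Type*} (R : ∀ i, (∀ j, A j) → A i) : Set (∀ j, A j) :=
  {a | ∀ i, R i a = a i}

/-- Extended payoff of a reaction-function profile: the supremum (= maximum, in a
finite game) of `u i` over the fixed points, and `⊥ = -∞` when there is none. -/
noncomputable def Upay {ι : Type*} {A : ι → Type*}
    (u : ∀ i : ι, (∀ j, A j) → ℝ) (R : ∀ i, (∀ j, A j) → A i) (i : ι) : EReal :=
  sSup ((fun a => ((u i a : ℝ) : EReal)) '' FixedPts R)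

/-- A profile is unambiguous if some fixed point weakly Pareto-dominates all fixed points. -/
def Unambiguous {ι : Type*} {A : ι → Type*}
    (u : ∀ i : ι, (∀ j, A j) → ℝ) (R : ∀ i, (∀ j, A j) → A i) : Prop :=
  ∃ a ∈ FixedPts R, ∀ a' ∈ FixedPts R, ∀ i, u i a' ≤ u i a

/-- Reaction-function equilibrium: an unambiguous profile with no profitable
unilateral deviation through any reaction function. -/
def IsRFE {ι : Type*} [DecidableEq ι] {A : ι → Type*}
    (u : ∀ i : ι, (∀ j, A j) → ℝ) (R : ∀ i, (∀ j, A j) → A i) : Prop :=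
  Unambiguous u R ∧
    ∀ (i : ι) (R' : (∀ j, A j) → A i), IndepOf i R' →
      Upay u (Function.update R i R') i ≤ Upay u R i

/-- Outcome `a` is supported in reaction-function equilibrium. -/
def SupportedOutcome {ι : Type*} [DecidableEq ι] {A : ι → Type*}
    (u : ∀ i : ι, (∀ j, A j) → ℝ) (a : ∀ j, A j) : Prop :=
  ∃ R : ∀ i, (∀ j, A j) → A i, (∀ i, IndepOf i (R i)) ∧ IsRFE u R ∧
    a ∈ FixedPts R ∧ ∀ a' ∈ FixedPts R, ∀ i, u i a' ≤ u i a

/-- Player `i`'s maxmin payoff. -/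
noncomputable def maxmin {ι : Type*} [DecidableEq ι] {A : ι → Type*}
    [∀ j, Fintype (A j)] [∀ j, Nonempty (A j)]
    (u : ∀ i : ι, (∀ j, A j) → ℝ) (i : ι) : ℝ :=
  ⨆ x : A i, ⨅ a : ∀ j, A j, u i (Function.update a i x)

/-- A reaction function is safe if it guarantees at least the maxmin payoff. -/
def SafeRF {ι : Type*} [DecidableEq ι] {A : ι → Type*}
    [∀ j, Fintype (A j)] [∀ j, Nonempty (A j)]
    (u : ∀ i : ι, (∀ j, A j) → ℝ) (i : ι) (r : (∀ j, A j) → A i) : Prop :=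
  ∀ a : ∀ j, A j, maxmin u i ≤ u i (Function.update a i (r a))

/-!
Each `R i` is determined by the actions of the players it depends on. Acyclicity of the
dependency graph on finitely many players makes "`i` depends on `j`" a well-founded relation,
so a fixed point can be built by well-founded recursion, each `a i` being computed from the
already-computed actions of the players `i` depends on; the same induction shows that any
fixed point agrees with it.
-/

open Function

section

variable {ι : Type*} {A : ι → Type*}

/-- The edge `i → j` of the dependency graph of `R`. -/
def ReactsTo (R : ∀ i, (∀ j, A j) → A i) (i j : ι) : Prop :=
  i ≠ j ∧ ∃ a b : ∀ k, A k, (∀ k, k ≠ j → a k = b k) ∧ R i a ≠ R i b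

theorem eq_of_eqOn_of_forall_update_eq [Finite ι] [DecidableEq ι] {β : Sort*}
    {f : (∀ j, A j) → β} {s : Set ι} (hf : ∀ j ∉ s, ∀ a x, f (update a j x) = f a)
    {a b : ∀ j, A j} (hab : ∀ j ∈ s, a j = b j) : f a = f b := by
  cases nonempty_fintype ι
  suffices ∀ t : Finset ι, ∀ a : ∀ j, A j,
      (∀ j ∈ s, a j = b j) → (∀ j ∉ t, a j = b j) → f a = f b from
    this Finset.univ a hab (by simp)
  intro t
  induction t using Finset.induction_on with
  | empty => exact fun a _ h => by rw [funext fun j => h j (Finset.notMem_empty j)]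
  | insert j t _ ih =>
    intro a hs ht
    have hstep : f (update a j (b j)) = f a := by
      by_cases hjs : j ∈ s
      · rw [← hs j hjs, update_eq_self]
      · exact hf j hjs a (b j)
    have hupd : ∀ k, (k ≠ j → a k = b k) → update a j (b j) k = b k := by
      intro k hk
      rcases eq_or_ne k j with rfl | hkj
      · exact update_self ..
      · rw [update_of_ne hkj, hk hkj]
    rw [← hstep]
    apply ih
    · exact fun k hk => hupd k fun _ => hs k hk
    · exact fun k hk => hupd k fun hkj => ht k (by simp [hkj, hk])

variable (R : ∀ i, (∀ j, A j) → A i)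

theorem apply_update_eq_of_not_reactsTo [DecidableEq ι] {i j : ι} (hind : IndepOf i (R i))
    (hij : ¬ ReactsTo R i j) (a : ∀ k, A k) (x : A j) : R i (update a j x) = R i a := by
  by_cases hji : j = i
  · exact hind _ _ fun k hk => update_of_ne (hji ▸ hk) ..
  · by_contra hne
    exact hij ⟨Ne.symm hji, _, _, fun k hk => update_of_ne hk .., hne⟩

theorem apply_eq_of_eqOn_reactsTo [Finite ι] {i : ι} (hind : IndepOf i (R i))
    {a b : ∀ k, A k} (hab : ∀ j, ReactsTo R i j → a j = b j) : R i a = R i b := by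
  classical
  exact eq_of_eqOn_of_forall_update_eq
    (fun j hj => apply_update_eq_of_not_reactsTo R hind hj) (s := {j | ReactsTo R i j}) hab

theorem wellFounded_flip_reactsTo [Finite ι] (hacyc : ∀ i, ¬ Relation.TransGen (ReactsTo R) i i) :
    WellFounded (flip (ReactsTo R)) := by
  have : Std.Irrefl (Relation.TransGen (flip (ReactsTo R))) :=
    ⟨fun i h => hacyc i (Relation.transGen_swap.mp h)⟩
  have : IsTrans ι (Relation.TransGen (flip (ReactsTo R))) :=
    ⟨fun _ _ _ => Relation.TransGen.trans⟩
  exact Subrelation.wf Relation.TransGen.single (Finite.wellFounded_of_trans_of_irrefl _)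

/-- `r j i` reads "`R i` may depend on `a j`". -/
theorem existsUnique_fixedPt_of_wellFounded [∀ j, Nonempty (A j)] {r : ι → ι → Prop}
    (hwf : WellFounded r) (hdep : ∀ i a b, (∀ j, r j i → a j = b j) → R i a = R i b) :
    ∃! a : ∀ j, A j, ∀ i, R i a = a i := by
  classical
  let g : ∀ i, A i := hwf.fix fun i g =>
    R i fun j => if h : r j i then g j h else Classical.arbitrary (A j)
  have hfix : ∀ i, R i g = g i := fun i => by
    rw [show g i = _ from hwf.fix_eq _ i]
    exact hdep i _ _ fun j hj => by rw [dif_pos hj]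
  refine ⟨g, hfix, fun a ha => funext fun i => ?_⟩
  induction i using hwf.induction with
  | _ i ih => rw [← ha i, ← hfix i]; exact hdep i a g ih

end

theorem stmt0_general {ι : Type*} [Fintype ι] {A : ι → Type*}
    [∀ j, Nonempty (A j)]
    (R : ∀ i, (∀ j, A j) → A i) (hind : ∀ i, IndepOf i (R i))
    (hacyc : ∀ i : ι, ¬ Relation.TransGen
      (fun i j : ι => i ≠ j ∧ ∃ a b : ∀ k, A k,
        (∀ k, k ≠ j → a k = b k) ∧ R i a ≠ R i b) i i) :
    ∃! a : ∀ j, A j, ∀ i, R i a = a i :=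
  existsUnique_fixedPt_of_wellFounded R (wellFounded_flip_reactsTo R hacyc)
    fun i _ _ => apply_eq_of_eqOn_reactsTo R (hind i)

/-- if the dependency graph of a reaction-function profile is acyclic,
then the profile has exactly one fixed point. -/
theorem stmt0 {ι : Type*} [Fintype ι] [DecidableEq ι] {A : ι → Type*}
    [∀ j, Fintype (A j)] [∀ j, Nonempty (A j)]
    (R : ∀ i, (∀ j, A j) → A i) (hind : ∀ i, IndepOf i (R i))
    (hacyc : ∀ i : ι, ¬ Relation.TransGen
      (fun i j : ι => i ≠ j ∧ ∃ a b : ∀ k, A k,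
        (∀ k, k ≠ j → a k = b k) ∧ R i a ≠ R i b) i i) :
    ∃! a : ∀ j, A j, ∀ i, R i a = a i :=
  stmt0_general R hind hacyc
end

section
/- Every reaction-function game has a reaction-function equilibrium. Concretely: order the players 1,…,n; any backward-induction (subgame-perfect) strategy profile of the corresponding perfect-information sequential-move game, translated into reaction functions (player i's reaction depends only on the actions of players 1,…,i−1), is an unambiguous profile from which no player can profitably deviate by any other reaction function. -/
/-!
Order the players and let `R i a` be player `i`'s backward-induction move after the history
`a_{<i}`: a best reply, given that the later players continue by backward induction. For an
upward-closed set `s` of players, backward-induction play of `s` leaves `a` unchanged exactly when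
`R j a = a j` for all `j ∈ s`, so the only fixed point of `R` is the subgame-perfect outcome `a*`.
A fixed point `a` of a unilateral deviation by player `i` is still fixed by every `R j` with
`j ≠ i`. Hence the later players answer `a i` by backward induction, so `u i a` is at most what
`i`'s best move after `a_{<i}` yields; and continuing by backward induction from `i` after `a_{<i}`
gives a fixed point of `R`, that is `a*`.
-/

open Finset
open Function (update update_of_ne update_eq_self)

theorem Finset.eq_Ioi_of_isUpperSet_insert {α : Type*} [LinearOrder α] [LocallyFiniteOrderTop α]
    {m : α} {s : Finset α} (hs : IsUpperSet (↑(insert m s) : Set α)) (hm : ∀ x ∈ s, m < x) :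
    s = Ioi m := by
  ext j
  refine ⟨fun hj => mem_Ioi.2 (hm j hj), fun hj => ?_⟩
  exact (mem_insert.1 (hs (mem_Ioi.1 hj).le (mem_insert_self m s))).resolve_left (mem_Ioi.1 hj).ne'

namespace BackwardInduction

noncomputable def argmax {α : Type*} [Finite α] [Nonempty α] (f : α → ℝ) : α :=
  (Finite.exists_max f).choose

theorem le_argmax {α : Type*} [Finite α] [Nonempty α] (f : α → ℝ) (x : α) : f x ≤ f (argmax f) :=
  (Finite.exists_max f).choose_spec x

variable {ι : Type*} [LinearOrder ι] {A : ι → Type*} [∀ j, Finite (A j)] [∀ j, Nonempty (A j)]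
  (u : ∀ i : ι, (∀ j, A j) → ℝ)

/-- The outcome when the players of `s` move in increasing order, each choosing a best reply to the
earlier moves given the backward-induction play of the players after them, while every player
outside `s` keeps the action prescribed by `a`. -/
noncomputable def play (s : Finset ι) (a : ∀ j, A j) : ∀ j, A j :=
  go (s.sort (· ≤ ·)) a
where
  go : List ι → (∀ j, A j) → ∀ j, A j
    | [], a => a
    | i :: l, a => go l (update a i (argmax fun x => u i (go l (update a i x))))

noncomputable def bestReply (i : ι) (s : Finset ι) (a : ∀ j, A j) : A i :=
  argmax fun x => u i (play u s (update a i x))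

theorem le_bestReply (i : ι) (s : Finset ι) (a : ∀ j, A j) (x : A i) :
    u i (play u s (update a i x)) ≤ u i (play u s (update a i (bestReply u i s a))) :=
  le_argmax (fun x => u i (play u s (update a i x))) x

theorem play_empty (a : ∀ j, A j) : play u ∅ a = a := by
  simp [play, play.go]

theorem play_insert {i : ι} {s : Finset ι} (hi : ∀ j ∈ s, i < j) (a : ∀ j, A j) :
    play u (insert i s) a = play u s (update a i (bestReply u i s a)) := by
  rw [play, sort_insert _ (fun j hj => (hi j hj).le) fun h => lt_irrefl i (hi i h)]
  rfl

theorem play_apply_of_notMem {s : Finset ι} {j : ι} (hj : j ∉ s) (a : ∀ j, A j) :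
    play u s a j = a j := by
  induction s using Finset.induction_on_min generalizing a with
  | empty => rw [play_empty]
  | insert m s hm ih =>
    rw [play_insert u hm, ih (fun h => hj (mem_insert_of_mem h)), update_of_ne]
    exact fun h => hj (h ▸ mem_insert_self m s)

theorem play_congr {s : Finset ι} {a b : ∀ j, A j} (h : ∀ j ∉ s, a j = b j) :
    play u s a = play u s b := by
  induction s using Finset.induction_on_min generalizing a b with
  | empty => simpa [play_empty] using funext fun j => h j (notMem_empty j)
  | insert m s hm ih =>
    have hupdate (x : A m) : play u s (update a m x) = play u s (update b m x) := by
      refine ih fun j hj => ?_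
      rcases eq_or_ne j m with rfl | hjm
      · simp
      · simp [update_of_ne hjm, h j (by simp [hjm, hj])]
    simp only [play_insert u hm, bestReply, hupdate]

theorem bestReply_congr {i : ι} {s : Finset ι} {a b : ∀ j, A j}
    (h : ∀ j, j ≠ i → j ∉ s → a j = b j) : bestReply u i s a = bestReply u i s b := by
  have hupdate (x : A i) : play u s (update a i x) = play u s (update b i x) := by
    refine play_congr u fun j hj => ?_
    rcases eq_or_ne j i with rfl | hji
    · simp
    · simp [update_of_ne hji, h j hji hj]
  simp only [bestReply, hupdate]

theorem play_idem (s : Finset ι) (a : ∀ j, A j) : play u s (play u s a) = play u s a :=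
  play_congr u fun _ hj => play_apply_of_notMem u hj a

section Reaction

variable [LocallyFiniteOrderTop ι]

noncomputable def reaction (i : ι) (a : ∀ j, A j) : A i :=
  bestReply u i (Ioi i) a

theorem reaction_congr {i : ι} {a b : ∀ j, A j} (h : ∀ j, j < i → a j = b j) :
    reaction u i a = reaction u i b :=
  bestReply_congr u fun j hji hj => h j <| lt_of_le_of_ne (not_lt.1 (mt mem_Ioi.2 hj)) hji

theorem indepOf_reaction (i : ι) : IndepOf i (reaction u i) :=
  fun _ _ h => reaction_congr u fun j hj => h j hj.ne

theorem play_Ici (i : ι) (a : ∀ j, A j) :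
    play u (Ici i) a = play u (Ioi i) (update a i (reaction u i a)) := by
  rw [← Ioi_insert, play_insert u fun _ => mem_Ioi.1, reaction]

theorem play_eq_self_iff {s : Finset ι} (hs : IsUpperSet (s : Set ι)) {b : ∀ j, A j} :
    play u s b = b ↔ ∀ j ∈ s, reaction u j b = b j := by
  induction s using Finset.induction_on_min generalizing b with
  | empty => simp [play_empty]
  | insert m s hm ih =>
    obtain rfl := eq_Ioi_of_isUpperSet_insert hs hm
    have ih' := @ih (by simpa using isUpperSet_Ioi m)
    rw [Ioi_insert, play_Ici, ← Ioi_insert, forall_mem_insert]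
    constructor
    · intro h
      have hm' : reaction u m b = b m := by
        simpa [play_apply_of_notMem u (lt_irrefl m ∘ mem_Ioi.1)] using congrFun h m
      rw [hm', update_eq_self] at h
      exact ⟨hm', ih'.1 h⟩
    · rintro ⟨hm', hs'⟩
      rw [hm', update_eq_self]
      exact ih'.2 hs'

theorem reaction_play {s : Finset ι} (hs : IsUpperSet (s : Set ι)) (a : ∀ j, A j) {j : ι}
    (hj : j ∈ s) : reaction u j (play u s a) = play u s a j :=
  (play_eq_self_iff u hs).1 (play_idem u s a) j hj

theorem play_Ici_mem_fixedPts {i : ι} {a : ∀ j, A j} (ha : ∀ j, j < i → reaction u j a = a j) :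
    play u (Ici i) a ∈ FixedPts (reaction u) := by
  have hbelow {j : ι} (hj : j < i) : play u (Ici i) a j = a j :=
    play_apply_of_notMem u (fun h => (mem_Ici.1 h).not_gt hj) a
  intro j
  rcases lt_or_ge j i with hj | hj
  · rw [reaction_congr u fun k hk => hbelow (hk.trans hj), ha j hj, hbelow hj]
  · exact reaction_play u (by simpa using isUpperSet_Ici i) a (mem_Ici.2 hj)

end Reaction

section Equilibrium

variable [LocallyFiniteOrderTop ι] [Fintype ι]

theorem mem_fixedPts_reaction_iff (c : ∀ j, A j) {a : ∀ j, A j} :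
    a ∈ FixedPts (reaction u) ↔ a = play u univ c := by
  have hcongr : play u univ a = play u univ c :=
    play_congr u fun j hj => absurd (mem_univ j) hj
  rw [eq_comm, ← hcongr, play_eq_self_iff u (by simpa using isUpperSet_univ)]
  simp [FixedPts]

theorem payoff_le_of_reaction_eq_of_ne (c : ∀ j, A j) {i : ι} {a : ∀ j, A j}
    (ha : ∀ j, j ≠ i → reaction u j a = a j) : u i a ≤ u i (play u univ c) := by
  have hlater : play u (Ioi i) a = a :=
    (play_eq_self_iff u (by simpa using isUpperSet_Ioi i)).2 fun j hj => ha j (mem_Ioi.1 hj).ne'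
  have hfixed := play_Ici_mem_fixedPts u fun j hj => ha j hj.ne
  calc u i a = u i (play u (Ioi i) (update a i (a i))) := by rw [update_eq_self, hlater]
    _ ≤ u i (play u (Ioi i) (update a i (reaction u i a))) := le_bestReply u i _ a (a i)
    _ = u i (play u univ c) := by rw [← play_Ici, (mem_fixedPts_reaction_iff u c).1 hfixed]

theorem isRFE_reaction : IsRFE u (reaction u) := by
  obtain ⟨c⟩ := (inferInstance : Nonempty (∀ j, A j))
  have hfixed : FixedPts (reaction u) = {play u univ c} :=
    Set.ext fun a => mem_fixedPts_reaction_iff u c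
  refine ⟨⟨play u univ c, by simp [hfixed], by simp [hfixed]⟩, fun i R' _ => ?_⟩
  rw [Upay, Upay, hfixed, Set.image_singleton, sSup_singleton]
  refine sSup_le ?_
  rintro _ ⟨a, ha, rfl⟩
  refine EReal.coe_le_coe_iff.2 (payoff_le_of_reaction_eq_of_ne u c fun j hj => ?_)
  simpa [update_of_ne hj] using ha j

end Equilibrium

end BackwardInduction

/-- every reaction-function game has a reaction-function equilibrium;
moreover one can be chosen as in the sequential-move (backward-induction) game,
where (ordering the players linearly) each player's reaction depends only on the
actions of the players preceding them. -/
theorem stmt2 {ι : Type*} [Fintype ι] [LinearOrder ι] {A : ι → Type*}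
    [∀ j, Fintype (A j)] [∀ j, Nonempty (A j)]
    (u : ∀ i : ι, (∀ j, A j) → ℝ) :
    ∃ R : ∀ i, (∀ j, A j) → A i,
      (∀ i, IndepOf i (R i)) ∧
      (∀ i, ∀ a b : ∀ j, A j, (∀ j, j < i → a j = b j) → R i a = R i b) ∧
      IsRFE u R := by
  let _ : LocallyFiniteOrderTop ι := .ofIci ι (fun i => {j | i ≤ j}) fun _ _ => by simp
  exact ⟨BackwardInduction.reaction u, BackwardInduction.indepOf_reaction u,
    fun _ _ _ => BackwardInduction.reaction_congr u, BackwardInduction.isRFE_reaction u⟩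
end

section
/- In a two-player reaction-function game, an outcome a ∈ A is supported in reaction-function equilibrium if and only if u_i(a) ≥ v̲_i for both players i, where v̲_i = max_{a_i} min_{a_{-i}} u_i(a_i, a_{-i}) is player i's maxmin payoff. -/
open Function

lemma exists_other_of_card_eq_two {ι : Type*} (h : Nat.card ι = 2) :
    ∃ t : ι → ι, ∀ i k, k ≠ i ↔ k = t i := by
  have hex : ∀ i : ι, ∃ j, j ≠ i ∧ ∀ k, k ≠ i → k = j :=
    fun i => (Nat.card_eq_two_iff' i).mp h
  choose t hti hunique using hex
  exact ⟨t, fun i k => ⟨hunique i k, fun hk => hk ▸ hti i⟩⟩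

section Maxmin

variable {ι : Type*} [DecidableEq ι] {A : ι → Type*}
  [∀ j, Fintype (A j)] [∀ j, Nonempty (A j)]

lemma exists_forall_maxmin_le [Finite ι] (u : ι → (∀ j, A j) → ℝ) (i : ι) :
    ∃ x : A i, ∀ c : ∀ j, A j, maxmin u i ≤ u i (update c i x) := by
  obtain ⟨x, hx⟩ := exists_eq_ciSup_of_finite
    (f := fun x : A i => ⨅ c : ∀ j, A j, u i (update c i x))
  refine ⟨x, fun c => ?_⟩
  rw [maxmin, ← hx]
  exact ciInf_le (Finite.bddBelow_range _) c

lemma le_maxmin_of_forall_le_update {u : ι → (∀ j, A j) → ℝ} {i p : ι}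
    (hp : ∀ k, k ≠ i ↔ k = p) {b : ∀ j, A j} (hb : ∀ y : A p, u i b ≤ u i (update b p y)) :
    u i b ≤ maxmin u i := by
  have hpi : p ≠ i := (hp p).mpr rfl
  have hswap : ∀ c : ∀ j, A j, update c i (b i) = update b p (c p) := by
    intro c
    funext k
    by_cases hki : k = i
    · subst hki
      rw [update_self, update_of_ne hpi.symm]
    · obtain rfl := (hp k).mp hki
      rw [update_of_ne hki, update_self]
  calc u i b ≤ ⨅ c : ∀ j, A j, u i (update c i (b i)) :=
        le_ciInf fun c => hswap c ▸ hb (c p)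
    _ ≤ maxmin u i := le_ciSup (f := fun x : A i => ⨅ c : ∀ j, A j, u i (update c i x))
        (Finite.bddAbove_range _) (b i)

end Maxmin

section Upay

variable {ι : Type*} {A : ι → Type*} {u : ι → (∀ j, A j) → ℝ}
  {R : ∀ i, (∀ j, A j) → A i} {i : ι}

lemma Upay_le_coe {c : ℝ} (h : ∀ b ∈ FixedPts R, u i b ≤ c) : Upay u R i ≤ (c : EReal) :=
  sSup_le <| by
    rintro _ ⟨b, hb, rfl⟩
    exact EReal.coe_le_coe_iff.mpr (h b hb)

lemma Upay_eq_coe {a : ∀ j, A j} (ha : a ∈ FixedPts R) (h : ∀ b ∈ FixedPts R, u i b ≤ u i a) :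
    Upay u R i = (u i a : EReal) :=
  le_antisymm (Upay_le_coe h) (le_sSup ⟨a, ha, rfl⟩)

end Upay

section Necessity

variable {ι : Type*} [DecidableEq ι] {A : ι → Type*}

lemma exists_mem_fixedPts_update_const {R : ∀ i, (∀ j, A j) → A i} {i j : ι}
    (hj : ∀ k, k ≠ i ↔ k = j) (hRj : IndepOf j (R j)) (c : ∀ k, A k) (x : A i) :
    ∃ b, b ∈ FixedPts (update R i fun _ => x) := by
  have hji : j ≠ i := (hj j).mpr rfl
  set c' := update c i x
  refine ⟨update c' j (R j c'), fun k => ?_⟩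
  by_cases hki : k = i
  · subst hki
    simp [c', update_of_ne hji.symm]
  · obtain rfl := (hj k).mp hki
    rw [update_of_ne hki, update_self]
    exact hRj _ _ fun l hl => update_of_ne hl _ _

variable [Finite ι] [∀ j, Fintype (A j)] [∀ j, Nonempty (A j)]

lemma maxmin_le_of_supportedOutcome {u : ι → (∀ j, A j) → ℝ} {a : ∀ j, A j} {i j : ι}
    (hj : ∀ k, k ≠ i ↔ k = j) (h : SupportedOutcome u a) : maxmin u i ≤ u i a := by
  obtain ⟨R, hind, ⟨-, hdev⟩, haR, hdom⟩ := h
  obtain ⟨x, hx⟩ := exists_forall_maxmin_le u i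
  obtain ⟨b, hb⟩ := exists_mem_fixedPts_update_const hj (hind j) a x
  have hbi : b i = x := by simpa using (hb i).symm
  have hba : (u i b : EReal) ≤ u i a :=
    calc (u i b : EReal) ≤ Upay u (update R i fun _ => x) i := le_sSup ⟨b, hb, rfl⟩
      _ ≤ Upay u R i := hdev i _ fun _ _ _ => rfl
      _ = u i a := Upay_eq_coe haR fun b hb => hdom b hb i
  calc maxmin u i ≤ u i (update b i x) := hx b
    _ = u i b := by rw [← hbi, update_eq_self]
    _ ≤ u i a := EReal.coe_le_coe_iff.mp hba

end Necessity

section GrimTrigger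

variable {ι : Type*} [DecidableEq ι] {A : ι → Type*} [∀ j, Fintype (A j)] [∀ j, Nonempty (A j)]

noncomputable def punish (u : ι → (∀ j, A j) → ℝ) (i p : ι) (b : ∀ k, A k) : A p :=
  (Finite.exists_min fun y : A p => u i (update b p y)).choose

lemma punish_le (u : ι → (∀ j, A j) → ℝ) (i p : ι) (b : ∀ k, A k) (y : A p) :
    u i (update b p (punish u i p b)) ≤ u i (update b p y) :=
  (Finite.exists_min fun y : A p => u i (update b p y)).choose_spec y

lemma indepOf_punish (u : ι → (∀ j, A j) → ℝ) (i p : ι) : IndepOf p (punish u i p) := by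
  intro b c hbc
  have hupd : (fun y : A p => update b p y) = fun y => update c p y := by
    funext y k
    by_cases hk : k = p
    · subst hk; simp
    · simp [update_of_ne hk, hbc k hk]
  simp only [punish, hupd]

open scoped Classical in
/-- `t p` is the player whom `p` punishes. -/
noncomputable def grimTrigger (u : ι → (∀ j, A j) → ℝ) (a : ∀ j, A j) (t : ι → ι) :
    ∀ p, (∀ j, A j) → A p :=
  fun p b => if ∀ k, k ≠ p → b k = a k then a p else punish u (t p) p b

variable {u : ι → (∀ j, A j) → ℝ} {a : ∀ j, A j} {t : ι → ι}

lemma indepOf_grimTrigger (p : ι) : IndepOf p (grimTrigger u a t p) := by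
  intro b c hbc
  have hconf : (∀ k, k ≠ p → b k = a k) ↔ ∀ k, k ≠ p → c k = a k :=
    forall₂_congr fun k hk => by rw [hbc k hk]
  unfold grimTrigger
  by_cases hb : ∀ k, k ≠ p → b k = a k
  · rw [if_pos hb, if_pos (hconf.mp hb)]
  · rw [if_neg hb, if_neg (mt hconf.mpr hb), indepOf_punish u (t p) p b c hbc]

lemma mem_fixedPts_grimTrigger : a ∈ FixedPts (grimTrigger u a t) := by
  intro p
  simp [grimTrigger]

lemma eq_or_punish_eq_of_grimTrigger_eq {p : ι} {b : ∀ j, A j}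
    (hb : grimTrigger u a t p b = b p) : b = a ∨ punish u (t p) p b = b p := by
  unfold grimTrigger at hb
  split_ifs at hb with hconf
  · left
    funext k
    by_cases hk : k = p
    · subst hk; exact hb.symm
    · exact hconf k hk
  · exact Or.inr hb

lemma le_of_grimTrigger_eq (ht : ∀ i k, k ≠ i ↔ k = t i) (h : ∀ i, maxmin u i ≤ u i a)
    {i : ι} {b : ∀ j, A j} (hb : grimTrigger u a t (t i) b = b (t i)) : u i b ≤ u i a := by
  have htt : t (t i) = i := ((ht (t i) i).mp ((ht i (t i)).mpr rfl).symm).symm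
  rcases eq_or_punish_eq_of_grimTrigger_eq hb with rfl | hpun
  · exact le_rfl
  · rw [htt] at hpun
    refine (le_maxmin_of_forall_le_update (ht i) fun y => ?_).trans (h i)
    simpa [hpun] using punish_le u i (t i) b y

lemma supportedOutcome_of_maxmin_le (ht : ∀ i k, k ≠ i ↔ k = t i)
    (h : ∀ i, maxmin u i ≤ u i a) : SupportedOutcome u a := by
  have hdom : ∀ b ∈ FixedPts (grimTrigger u a t), ∀ i, u i b ≤ u i a :=
    fun b hb i => le_of_grimTrigger_eq ht h (hb (t i))
  refine ⟨grimTrigger u a t, indepOf_grimTrigger, ⟨⟨a, mem_fixedPts_grimTrigger, hdom⟩, ?_⟩,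
    mem_fixedPts_grimTrigger, hdom⟩
  intro i R' _
  rw [Upay_eq_coe mem_fixedPts_grimTrigger fun b hb => hdom b hb i]
  refine Upay_le_coe fun b hb => le_of_grimTrigger_eq ht h ?_
  simpa [update_of_ne ((ht i (t i)).mpr rfl)] using hb (t i)

end GrimTrigger

/-- in a two-player game, an outcome is supported in
reaction-function equilibrium iff it gives every player at least the maxmin payoff. -/
theorem stmt3 {ι : Type*} [Fintype ι] [DecidableEq ι] {A : ι → Type*}
    [∀ j, Fintype (A j)] [∀ j, Nonempty (A j)]
    (hcard : Fintype.card ι = 2)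
    (u : ∀ i : ι, (∀ j, A j) → ℝ) (a : ∀ j, A j) :
    SupportedOutcome u a ↔ ∀ i, maxmin u i ≤ u i a := by
  obtain ⟨t, ht⟩ := exists_other_of_card_eq_two (Nat.card_eq_fintype_card.trans hcard)
  exact ⟨fun h i => maxmin_le_of_supportedOutcome (ht i) h,
    supportedOutcome_of_maxmin_le ht⟩
end

section
/- In a reaction-function game, if a profile R is not a reaction-function equilibrium because some player i has a profitable deviation R'_i (i.e., U_i(R'_i, R_{-i}) > U_i(R)), then player i also has a profitable deviation through a constant reaction function. -/
section ReactionFunctions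

variable {ι : Type*} {A : ι → Type*}

theorem mem_fixedPts_update_const [DecidableEq ι] {R : ∀ i, (∀ j, A j) → A i} {i : ι}
    {f : (∀ j, A j) → A i} {a : ∀ j, A j} (ha : a ∈ FixedPts (Function.update R i f)) :
    a ∈ FixedPts (Function.update R i fun _ => a i) := by
  intro j
  rcases eq_or_ne j i with rfl | hj
  · simp
  · simpa [Function.update_of_ne hj] using ha j

theorem coe_le_upay (u : ∀ i : ι, (∀ j, A j) → ℝ) {R : ∀ i, (∀ j, A j) → A i} (i : ι)
    {a : ∀ j, A j} (ha : a ∈ FixedPts R) : ((u i a : ℝ) : EReal) ≤ Upay u R i :=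
  le_sSup ⟨a, ha, rfl⟩

theorem exists_mem_fixedPts_lt_of_lt_upay {u : ∀ i : ι, (∀ j, A j) → ℝ}
    {R : ∀ i, (∀ j, A j) → A i} {i : ι} {x : EReal} (hx : x < Upay u R i) :
    ∃ a ∈ FixedPts R, x < u i a := by
  simpa only [Set.exists_mem_image] using lt_sSup_iff.mp hx

end ReactionFunctions

theorem stmt4_general {ι : Type*} [DecidableEq ι] {A : ι → Type*}
    (u : ∀ i : ι, (∀ j, A j) → ℝ)
    (R : ∀ i, (∀ j, A j) → A i)
    (i : ι) (R' : (∀ j, A j) → A i)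
    (hdev : Upay u R i < Upay u (Function.update R i R') i) :
    ∃ c : A i, Upay u R i < Upay u (Function.update R i (fun _ => c)) i := by
  obtain ⟨a, ha, hlt⟩ := exists_mem_fixedPts_lt_of_lt_upay hdev
  exact ⟨a i, hlt.trans_le (coe_le_upay u i (mem_fixedPts_update_const ha))⟩

/-- if a player has a profitable deviation from a profile, then the
player also has a profitable deviation through a constant reaction function. -/
theorem stmt4 {ι : Type*} [Fintype ι] [DecidableEq ι] {A : ι → Type*}
    [∀ j, Fintype (A j)] [∀ j, Nonempty (A j)]
    (u : ∀ i : ι, (∀ j, A j) → ℝ)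
    (R : ∀ i, (∀ j, A j) → A i) (hind : ∀ i, IndepOf i (R i))
    (i : ι) (R' : (∀ j, A j) → A i) (hR' : IndepOf i R')
    (hdev : Upay u R i < Upay u (Function.update R i R') i) :
    ∃ c : A i, Upay u R i < Upay u (Function.update R i (fun _ => c)) i :=
  stmt4_general u R i R' hdev
end

section
/- Consider n ≥ 4 players, each with action set containing {0,1}, and define for each player i (indices mod n) the reaction function R_i(a_{-i}) = 1 if a_{i−1} = 0 and a_{i+1} ≠ 0, and R_i(a_{-i}) = 0 otherwise. Then for every action profile a ∈ {0,1}^n with a ≠ (0,…,0), at least two players i satisfy R_i(a_{-i}) ≠ a_i. Consequently, for every player i and every alternative reaction function R'_i, the fixed-point set of (R'_i, R_{-i}) is contained in {(0,…,0)}. -/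
section CyclicReaction

variable {ι α : Type*} [Zero α] [One α] [DecidableEq α]

def cyclicReaction [Sub ι] [Add ι] [One ι] (a : ι → α) (i : ι) : α :=
  if a (i - 1) = 0 ∧ a (i + 1) ≠ 0 then 1 else 0

variable [AddGroupWithOne ι] {a : ι → α} {i : ι}

theorem neighbours_of_eq_cyclicReaction (h : a i = cyclicReaction a i) (hi : a i ≠ 0) :
    a (i - 1) = 0 ∧ a (i + 1) ≠ 0 := by
  by_contra hc
  exact hi (by rw [h, cyclicReaction, if_neg hc])

theorem ne_zero_of_eq_cyclicReaction [NeZero (1 : α)] (h : a i = cyclicReaction a i)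
    (hl : a (i - 1) = 0) (hr : a (i + 1) ≠ 0) : a i ≠ 0 := by
  rw [h, cyclicReaction, if_pos ⟨hl, hr⟩]
  exact one_ne_zero

theorem eq_zero_of_eq_cyclicReaction_of_eq_cyclicReaction_add_one
    (h : a i = cyclicReaction a i) (h' : a (i + 1) = cyclicReaction a (i + 1)) : a i = 0 := by
  by_contra hi
  have hpred := (neighbours_of_eq_cyclicReaction h' (neighbours_of_eq_cyclicReaction h hi).2).1
  exact hi (by rwa [add_sub_cancel_right] at hpred)

end CyclicReaction

theorem ZMod.sub_natCast_ne_self {m k : ℕ} (hk : 0 < k) (hkm : k < m) (x : ZMod m) :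
    x - k ≠ x := by
  rw [Ne, sub_eq_self, ZMod.natCast_eq_zero_iff]
  exact fun hdvd => absurd (Nat.le_of_dvd hk hdvd) (by omega)

/- Two consecutive players who both follow the rule leave the first one at `0`, so only `j - 1`
and `j` can play nonzero; the leftmost of them that does would make its left neighbour play `1`. -/
theorem eq_zero_of_eq_cyclicReaction_of_ne {α : Type*} [Zero α] [One α] [NeZero (1 : α)]
    [DecidableEq α] {m : ℕ} (hm : 4 ≤ m) (a : ZMod m → α) (j : ZMod m)
    (H : ∀ i, i ≠ j → a i = cyclicReaction a i) : a = 0 := by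
  have ne1 (x : ZMod m) : x - 1 ≠ x := by
    simpa using ZMod.sub_natCast_ne_self (k := 1) (by omega) (by omega) x
  have ne2 (x : ZMod m) : x - 1 - 1 ≠ x := by
    simpa [sub_sub, one_add_one_eq_two] using
      ZMod.sub_natCast_ne_self (k := 2) (by omega) (by omega) x
  have ne3 (x : ZMod m) : x - 1 - 1 - 1 ≠ x := by
    simpa [sub_sub, one_add_one_eq_two, two_add_one_eq_three] using
      ZMod.sub_natCast_ne_self (k := 3) (by omega) (by omega) x
  have outside : ∀ i, i ≠ j - 1 → i ≠ j → a i = 0 := fun i hi hij =>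
    eq_zero_of_eq_cyclicReaction_of_eq_cyclicReaction_add_one (H i hij)
      (H (i + 1) fun h => hi (eq_sub_of_add_eq h))
  have hj1 : a (j - 1) = 0 := by
    by_contra hne
    exact ne_zero_of_eq_cyclicReaction (H _ (ne2 j)) (outside _ (ne2 _) (ne3 j))
      (by rwa [sub_add_cancel]) (outside _ (ne1 _) (ne2 j))
  have hj : a j = 0 := by
    by_contra hne
    exact ne_zero_of_eq_cyclicReaction (H _ (ne1 j)) (outside _ (ne1 _) (ne2 j))
      (by rwa [sub_add_cancel]) hj1
  funext i
  by_cases hij : i = j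
  · exact hij ▸ hj
  by_cases hij1 : i = j - 1
  · exact hij1 ▸ hj1
  exact outside i hij1 hij

/-- for `n ≥ 4` cyclically arranged players with the reaction
"play 1 iff my predecessor plays 0 and my successor plays nonzero", every
nonzero profile leaves at least two players unhappy; consequently any unilateral
deviation has fixed-point set contained in the all-zero outcome. -/
theorem stmt5 (n : ℕ)
    (R : ∀ _ : ZMod (n + 4), (ZMod (n + 4) → Fin 2) → Fin 2)
    (hR : ∀ i a, R i a = if a (i - 1) = 0 ∧ a (i + 1) ≠ 0 then 1 else 0) :
    (∀ a : ZMod (n + 4) → Fin 2, a ≠ (fun _ => 0) →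
      2 ≤ (Finset.univ.filter fun i => R i a ≠ a i).card) ∧
    ∀ (i : ZMod (n + 4)) (R' : (ZMod (n + 4) → Fin 2) → Fin 2),
      FixedPts (Function.update R i R') ⊆ {fun _ => (0 : Fin 2)} := by
  have hR' : ∀ i a, R i a = cyclicReaction a i := hR
  refine ⟨fun a ha => ?_, fun i R' a ha => ?_⟩
  · by_contra! hlt
    obtain ⟨j, hj⟩ := Finset.card_le_one_iff_subset_singleton.mp (Nat.le_of_lt_succ hlt)
    refine ha (eq_zero_of_eq_cyclicReaction_of_ne (by omega) a j fun i hi => ?_)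
    by_contra hne
    exact hi (Finset.mem_singleton.mp (hj (Finset.mem_filter.mpr
      ⟨Finset.mem_univ i, by rw [hR']; exact Ne.symm hne⟩)))
  · exact eq_zero_of_eq_cyclicReaction_of_ne (by omega) a i fun k hk => by
      rw [← hR', ← Function.update_of_ne hk R' R]
      exact (ha k).symm
end

section
/- Consider 3 players labeled 0,1,2, each with action set containing {0,1,2}, and define reaction functions R_i by R_i(0,0) = 0 and, for a_{-i} ≠ (0,0), R_i(a_{-i}) = (i − Σ_{j≠i} a_j) mod 3. Then (0,0,0) is a fixed point of R, and for every action profile a ≠ (0,0,0) with entries in {0,1,2}, at most one player i satisfies R_i(a_{-i}) = a_i. Consequently, for every player i and every alternative reaction function R'_i, the fixed-point set of (R'_i, R_{-i}) is contained in {(0,0,0)}. -/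
/-!
Away from the all-zero profile, player `i`'s reaction agrees with `a i` only when
`Σ_j a_j = i` in `ZMod 3`, so no two players are content at the same time. A unilateral
deviation leaves two players reacting as before, so it has no fixed point other than zero.
-/

open Finset

def modSumReaction (n : ℕ) (i : Fin n) (a : Fin n → ZMod n) : ZMod n :=
  if ∀ j, j ≠ i → a j = 0 then 0 else ((i : ℕ) : ZMod n) - ∑ j ∈ univ.erase i, a j

section ModSumReaction

variable {n : ℕ}

theorem modSumReaction_zero (i : Fin n) : modSumReaction n i 0 = 0 :=
  if_pos fun _ _ => rfl

theorem sum_eq_of_modSumReaction_eq {a : Fin n → ZMod n} (ha : a ≠ 0) {i : Fin n}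
    (h : modSumReaction n i a = a i) : ∑ j, a j = ((i : ℕ) : ZMod n) := by
  unfold modSumReaction at h
  split_ifs at h with hothers
  · refine absurd (funext fun j => ?_) ha
    by_cases hj : j = i
    · subst hj; exact h.symm
    · exact hothers j hj
  · rw [← add_sum_erase _ _ (mem_univ i)]
    linear_combination -h

theorem natCast_fin_injective : Function.Injective fun i : Fin n => ((i : ℕ) : ZMod n) := by
  intro i k hik
  have := (ZMod.natCast_eq_natCast_iff' _ _ _).mp hik
  rwa [Nat.mod_eq_of_lt i.isLt, Nat.mod_eq_of_lt k.isLt, ← Fin.ext_iff] at this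

theorem card_filter_modSumReaction_eq_le_one {a : Fin n → ZMod n} (ha : a ≠ 0) :
    #{i | modSumReaction n i a = a i} ≤ 1 := by
  refine card_le_one.mpr fun i hi k hk => natCast_fin_injective ?_
  simp only [mem_filter, mem_univ, true_and] at hi hk
  exact (sum_eq_of_modSumReaction_eq ha hi).symm.trans (sum_eq_of_modSumReaction_eq ha hk)

end ModSumReaction

theorem fixedPts_update_subset {ι : Type*} [Fintype ι] [DecidableEq ι] {A : ι → Type*}
    [∀ i, DecidableEq (A i)] {R : ∀ i, (∀ j, A j) → A i} {S : Set (∀ j, A j)}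
    (hι : 3 ≤ Fintype.card ι) (hR : ∀ a ∉ S, #{i | R i a = a i} ≤ 1)
    (i : ι) (R' : (∀ j, A j) → A i) : FixedPts (Function.update R i R') ⊆ S := by
  intro a ha
  by_contra haS
  have hothers : univ.erase i ⊆ ({j | R j a = a j} : Finset ι) := fun j hj => by
    have hji := (mem_erase.mp hj).1
    simpa [Function.update_of_ne hji] using ha j
  have := card_le_card hothers
  rw [card_erase_of_mem (mem_univ i), card_univ] at this
  have := hR a haS
  omega

/-- three players with reactions `R_i(0,0) = 0` and otherwise
`R_i(a_{-i}) = (i - Σ_{j≠i} a_j) mod 3`: the all-zero profile is a fixed point,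
every other profile makes at most one player happy, and every unilateral
deviation has fixed-point set contained in the all-zero outcome. -/
theorem stmt6 (R : ∀ _ : Fin 3, (Fin 3 → ZMod 3) → ZMod 3)
    (hR : ∀ (i : Fin 3) (a : Fin 3 → ZMod 3),
      R i a = if ∀ j, j ≠ i → a j = 0 then 0
        else ((i : ℕ) : ZMod 3) - ∑ j ∈ Finset.univ.erase i, a j) :
    ((fun _ => (0 : ZMod 3)) ∈ FixedPts R) ∧
    (∀ a : Fin 3 → ZMod 3, a ≠ (fun _ => 0) →
      (Finset.univ.filter fun i => R i a = a i).card ≤ 1) ∧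
    ∀ (i : Fin 3) (R' : (Fin 3 → ZMod 3) → ZMod 3),
      FixedPts (Function.update R i R') ⊆ {fun _ => (0 : ZMod 3)} := by
  obtain rfl : R = modSumReaction 3 := funext fun i => funext (hR i)
  refine ⟨modSumReaction_zero, fun a ha => card_filter_modSumReaction_eq_le_one ha,
    fun i R' => fixedPts_update_subset le_rfl
      (fun a ha => card_filter_modSumReaction_eq_le_one ha) i R'⟩
end

section
/- In a three-player game where each player has exactly two actions {0,1} and where the outcome (1,1,1) gives every player strictly lower payoff than every other outcome, the outcome (1,1,1) cannot be supported in reaction-function equilibrium. -/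
/-! In an equilibrium supporting `(1,1,1)`, that profile is the only fixed point, so at every other
profile `b` at least two players move: were all players but `i` content at `b`, player `i` could
commit to `b i`, make `b` executable and gain. But the reaction of player `j` ignores `b j`, so `j`
moves at exactly one profile of each pair differing only in coordinate `j`, that is, at half of
the profiles. Counting moves, `2 * 7 ≤ 3 * 4`, which is absurd. -/

open Finset

section ReactionFunctions

variable {ι : Type*} {A : ι → Type*}

theorem Upay_eq_of_FixedPts_eq_singleton {u : ι → (∀ j, A j) → ℝ}
    {R : ∀ i, (∀ j, A j) → A i} {a : ∀ j, A j} (hR : FixedPts R = {a}) (i : ι) :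
    Upay u R i = u i a := by
  rw [Upay, hR, Set.image_singleton, sSup_singleton]

theorem coe_le_Upay_of_mem_FixedPts {u : ι → (∀ j, A j) → ℝ}
    {R : ∀ i, (∀ j, A j) → A i} {b : ∀ j, A j} (hb : b ∈ FixedPts R) (i : ι) :
    (u i b : EReal) ≤ Upay u R i :=
  le_sSup ⟨b, hb, rfl⟩

variable [DecidableEq ι]

theorem mem_FixedPts_update_const {R : ∀ i, (∀ j, A j) → A i} {b : ∀ j, A j} {i : ι}
    (hb : ∀ j, j ≠ i → R j b = b j) : b ∈ FixedPts (Function.update R i fun _ => b i) := by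
  intro j
  rcases eq_or_ne j i with rfl | hj
  · simp
  · rw [Function.update_of_ne hj]
    exact hb j hj

theorem IsRFE.coe_le_Upay_of_forall_ne {u : ι → (∀ j, A j) → ℝ}
    {R : ∀ i, (∀ j, A j) → A i} (hR : IsRFE u R) {b : ∀ j, A j} {i : ι}
    (hb : ∀ j, j ≠ i → R j b = b j) : (u i b : EReal) ≤ Upay u R i :=
  (coe_le_Upay_of_mem_FixedPts (mem_FixedPts_update_const hb) i).trans
    (hR.2 i _ fun _ _ _ => rfl)

variable [Fintype ι] [∀ j, DecidableEq (A j)]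

def movers (R : ∀ i, (∀ j, A j) → A i) (b : ∀ j, A j) : Finset ι :=
  {j | R j b ≠ b j}

theorem IsRFE.two_le_card_movers [Nonempty ι] {u : ι → (∀ j, A j) → ℝ}
    {R : ∀ i, (∀ j, A j) → A i} (hR : IsRFE u R) {b : ∀ j, A j}
    (hb : ∀ i, Upay u R i < u i b) : 2 ≤ #(movers R b) := by
  by_contra! hlt
  obtain ⟨i, hi⟩ := card_le_one_iff_subset_singleton.1 (Nat.le_of_lt_succ hlt)
  refine (hR.coe_le_Upay_of_forall_ne fun j hj => ?_).not_gt (hb i)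
  by_contra hne
  exact hj (mem_singleton.1 (hi (by simpa [movers] using hne)))

end ReactionFunctions

section BinaryActions

variable {ι : Type*} [DecidableEq ι]

def toggle (j : ι) (b : ι → Fin 2) : ι → Fin 2 :=
  Function.update b j (b j + 1)

theorem toggle_involutive (j : ι) : Function.Involutive (toggle j) := by
  intro b
  have : b j + 1 + 1 = b j := by omega
  simp [toggle, this]

variable [Fintype ι]

theorem card_filter_ne_of_indepOf {j : ι} {f : (ι → Fin 2) → Fin 2} (hf : IndepOf j f) :
    2 * #{b | f b ≠ b j} = Fintype.card (ι → Fin 2) := by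
  have hswap : #{b | f b ≠ b j} = #{b | ¬ f b ≠ b j} := by
    refine card_equiv (toggle_involutive j).toPerm fun b => ?_
    have hfb : f (toggle j b) = f b := hf _ _ fun k hk => by simp [toggle, hk]
    have hne : b j + 1 ≠ b j := by omega
    simp only [mem_filter, mem_univ, true_and, Function.Involutive.coe_toPerm, hfb]
    simp only [toggle, Function.update_self]
    omega
  rw [two_mul]
  nth_rw 2 [hswap]
  exact card_filter_add_card_filter_not _

theorem two_mul_sum_card_movers {R : ι → (ι → Fin 2) → Fin 2} (hR : ∀ i, IndepOf i (R i)) :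
    2 * ∑ b, #(movers R b) = Fintype.card ι * Fintype.card (ι → Fin 2) := by
  have hcount : ∑ b, #(movers R b) = ∑ j, #{b | R j b ≠ b j} :=
    sum_card_bipartiteAbove_eq_sum_card_bipartiteBelow (fun b j => R j b ≠ b j)
  rw [hcount, mul_sum]
  simp only [card_filter_ne_of_indepOf (hR _), sum_const, card_univ, smul_eq_mul]

theorem four_mul_card_sub_one_le {R : ι → (ι → Fin 2) → Fin 2} (hR : ∀ i, IndepOf i (R i))
    (a : ι → Fin 2) (hmove : ∀ b, b ≠ a → 2 ≤ #(movers R b)) :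
    4 * (Fintype.card (ι → Fin 2) - 1) ≤ Fintype.card ι * Fintype.card (ι → Fin 2) := by
  rw [← two_mul_sum_card_movers hR, ← card_univ, ← card_erase_of_mem (mem_univ a)]
  calc 4 * #(univ.erase a) = 2 * ∑ _ ∈ univ.erase a, 2 := by rw [sum_const, smul_eq_mul]; ring
    _ ≤ 2 * ∑ b ∈ univ.erase a, #(movers R b) := by
        gcongr with b hb
        exact hmove b (ne_of_mem_erase hb)
    _ ≤ 2 * ∑ b, #(movers R b) := by gcongr; exact erase_subset a univ

end BinaryActions

/-- three players with two actions `{0,1}` each; if the outcome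
`(1,1,1)` is strictly worse than every other outcome for every player, then
`(1,1,1)` cannot be supported in reaction-function equilibrium. -/
theorem stmt7 (u : ∀ _ : Fin 3, (Fin 3 → Fin 2) → ℝ)
    (hworst : ∀ (i : Fin 3) (a : Fin 3 → Fin 2),
      a ≠ (fun _ => 1) → u i (fun _ => 1) < u i a) :
    ¬ SupportedOutcome u (fun _ => (1 : Fin 2)) := by
  rintro ⟨R, hind, hR, hfix, hbest⟩
  have hE : FixedPts R = {fun _ => 1} := by
    refine Set.eq_singleton_iff_unique_mem.2 ⟨hfix, fun b hb => ?_⟩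
    by_contra hne
    exact (hbest b hb 0).not_gt (hworst 0 b hne)
  have hmove : ∀ b, b ≠ (fun _ => 1) → 2 ≤ #(movers R b) := fun b hb =>
    hR.two_le_card_movers fun i => by
      rw [Upay_eq_of_FixedPts_eq_singleton hE]
      exact EReal.coe_lt_coe_iff.2 (hworst i b hb)
  have hcount := four_mul_card_sub_one_le hind _ hmove
  norm_num [Fintype.card_fun] at hcount
end

section
/- In a game where all n players use the same monotone symmetric reaction function, every fixed point is coordinated: if a is a fixed point of the profile R with R_i ≅ R_j monotone for all i, j, then a_i = a_j for all players i, j. -/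
/-- Conditional collaboration: coordinate if the others coordinate (at a positive
level), and otherwise react at least at the others' minimum but strictly below
their maximum investment. -/
def CondCollab {ι : Type*} {H : ℕ} (i : ι) (r : (ι → Fin (H + 1)) → Fin (H + 1)) : Prop :=
  (∀ α : Fin (H + 1), α ≠ 0 → ∀ a : ι → Fin (H + 1), (∀ j, j ≠ i → a j = α) → r a = α) ∧
  (∀ a : ι → Fin (H + 1), (∃ j k, j ≠ i ∧ k ≠ i ∧ a j ≠ a k) →
    (∃ j, j ≠ i ∧ a j ≤ r a) ∧ (∃ j, j ≠ i ∧ r a < a j))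

/-- Payoff consistency: the reaction is the same across payoff-equivalent
action profiles of the others. -/
def PayoffConsistent {ι : Type*} [DecidableEq ι] {H : ℕ}
    (u : ι → (ι → Fin (H + 1)) → ℝ) (i : ι) (r : (ι → Fin (H + 1)) → Fin (H + 1)) : Prop :=
  ∀ a a' : ι → Fin (H + 1),
    (∀ x : Fin (H + 1), u i (Function.update a i x) = u i (Function.update a' i x)) →
    r a = r a'

/-- A symmetric reaction function: invariant under permutations of the other players. -/
def SymmRF {ι : Type*} {H : ℕ} (i : ι) (r : (ι → Fin (H + 1)) → Fin (H + 1)) : Prop :=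
  ∀ σ : Equiv.Perm ι, σ i = i → ∀ a : ι → Fin (H + 1), r (fun k => a (σ k)) = r a

/-- A norm: a profile in which all players play the same symmetric, monotone
reaction function. -/
def IsNorm {ι : Type*} [DecidableEq ι] {H : ℕ} (R : ∀ _ : ι, (ι → Fin (H + 1)) → Fin (H + 1)) : Prop :=
  (∀ i, IndepOf i (R i)) ∧ (∀ i, Monotone (R i)) ∧ (∀ i, SymmRF i (R i)) ∧
  (∀ (i j : ι) (a : ι → Fin (H + 1)), R j (fun k => a (Equiv.swap i j k)) = R i a)

/-- Norm-proofness: playing `r` against any norm yields at least the payoff of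
conforming to the norm. -/
noncomputable def NormProof {ι : Type*} [DecidableEq ι] {H : ℕ}
    (u : ι → (ι → Fin (H + 1)) → ℝ) (i : ι) (r : (ι → Fin (H + 1)) → Fin (H + 1)) : Prop :=
  ∀ R : ∀ _ : ι, (ι → Fin (H + 1)) → Fin (H + 1), IsNorm R →
    Upay u R i ≤ Upay u (Function.update R i r) i

/- At a fixed point `a`, let player `j` look at the profile `a ∘ swap i j`, in which `i` and `j`
trade places. By the swap condition `j` answers it with `R i a = a i`; on the other hand, away
from `j`'s own (irrelevant) coordinate that profile lies below `a` as soon as `a j ≤ a i`, so by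
monotonicity the answer is at most `R j a = a j`. Hence `a j ≤ a i` forces `a i ≤ a j`, and
comparability of any two actions gives coordination. -/

theorem update_comp_swap_le {ι α : Type*} [DecidableEq ι] [Preorder α] {a : ι → α} {i j : ι}
    (hji : a j ≤ a i) : Function.update (fun k => a (Equiv.swap i j k)) j (a j) ≤ a := by
  intro k
  rcases eq_or_ne k j with rfl | hkj
  · simp
  rcases eq_or_ne k i with rfl | hki
  · simpa [hkj] using hji
  · simp [hkj, Equiv.swap_apply_of_ne_of_ne hki hkj]

theorem le_of_mem_fixedPts_of_le {ι α : Type*} [DecidableEq ι] [Preorder α]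
    {R : ι → (ι → α) → α} {a : ι → α} (ha : a ∈ FixedPts R) {i j : ι}
    (hind : IndepOf j (R j)) (hmono : Monotone (R j))
    (hswap : R j (fun k => a (Equiv.swap i j k)) = R i a) (hji : a j ≤ a i) :
    a i ≤ a j :=
  calc a i = R j (fun k => a (Equiv.swap i j k)) := by rw [hswap, ha i]
    _ = R j (Function.update (fun k => a (Equiv.swap i j k)) j (a j)) :=
        hind _ _ fun _ hk => by rw [Function.update_of_ne hk]
    _ ≤ R j a := hmono (update_comp_swap_le hji)
    _ = a j := ha j

theorem stmt12_general {ι : Type*} [DecidableEq ι] {H : ℕ}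
    (R : ∀ _ : ι, (ι → Fin (H + 1)) → Fin (H + 1))
    (hind : ∀ i, IndepOf i (R i)) (hmono : ∀ i, Monotone (R i))
    (hsame : ∀ (i j : ι) (a : ι → Fin (H + 1)), R j (fun k => a (Equiv.swap i j k)) = R i a)
    (a : ι → Fin (H + 1)) (ha : a ∈ FixedPts R) :
    ∀ i j, a i = a j := by
  have key (i j : ι) : a j ≤ a i → a i ≤ a j :=
    le_of_mem_fixedPts_of_le ha (hind j) (hmono j) (hsame i j a)
  intro i j
  rcases le_total (a i) (a j) with h | h
  · exact le_antisymm h (key j i h)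
  · exact le_antisymm (key i j h) h

/-- if all players use the same monotone symmetric reaction
function, then every fixed point is coordinated. -/
theorem stmt12 {ι : Type*} [Fintype ι] [DecidableEq ι] {H : ℕ}
    (R : ∀ _ : ι, (ι → Fin (H + 1)) → Fin (H + 1))
    (hind : ∀ i, IndepOf i (R i)) (hmono : ∀ i, Monotone (R i))
    (hsym : ∀ i, SymmRF i (R i))
    (hsame : ∀ (i j : ι) (a : ι → Fin (H + 1)), R j (fun k => a (Equiv.swap i j k)) = R i a)
    (a : ι → Fin (H + 1)) (ha : a ∈ FixedPts R) :
    ∀ i j, a i = a j :=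
  stmt12_general R hind hmono hsame a ha
end

section
/- In a high-risk public-good game (1/n < λ < H/(nH−1)), the reaction R*_i(a_{-i}) = ⌊(Σ_{j≠i} a_j)/(n−1)⌋ is welfare-maximizing conditional on safe play: for every a_{-i}, R*_i(a_{-i}) is the largest action a_i ∈ {0,…,H} satisfying u_i(a_i, a_{-i}) ≥ 0, and hence maximizes Σ_j u_j(a_i, a_{-i}) subject to u_i(a_i, a_{-i}) ≥ 0. -/
/-! In a public-good game player `i`'s payoff at own contribution `x`, when the others contribute
`S` in total, is `λ(S + x) - x`. Contributing the rounded-down average `x = ⌊S/(n-1)⌋` of the others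
still pays `x(λn - 1) ≥ 0`. Contributing more means `S + 1 ≤ x(n-1)`, and then the payoff is at most
`x(λn - 1) - λ ≤ H(λn - 1) - λ < 0`: this is exactly the high-risk condition `λ(nH - 1) < H`.
Total welfare `(λn - 1)(S + x)` increases in `x`, so the largest safe action also maximizes
welfare among the safe ones. -/

lemma public_good_payoff_nonneg_of_mul_le {l n S x : ℝ} (hl : 0 ≤ l) (hln : 1 ≤ l * n)
    (hx : 0 ≤ x) (hS : x * (n - 1) ≤ S) : 0 ≤ l * (S + x) - x := by
  nlinarith [mul_nonneg hl (sub_nonneg.2 hS), mul_nonneg hx (sub_nonneg.2 hln)]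

lemma public_good_payoff_neg_of_add_one_le_mul {l n H S x : ℝ} (hl : 0 ≤ l) (hln : 1 ≤ l * n)
    (hxH : x ≤ H) (hrisk : l * (n * H - 1) < H) (hS : S + 1 ≤ x * (n - 1)) :
    l * (S + x) - x < 0 := by
  nlinarith [mul_le_mul_of_nonneg_left hS hl, mul_le_mul_of_nonneg_right hxH (sub_nonneg.2 hln)]

lemma public_good_payoff_nonneg_iff_le_div {l : ℝ} {n H S x : ℕ} (hn : 2 ≤ n)
    (hl : 1 / (n : ℝ) < l) (hrisk : l * ((n : ℝ) * H - 1) < H) (hxH : x ≤ H) :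
    0 ≤ l * ((S : ℝ) + x) - x ↔ x ≤ S / (n - 1) := by
  have hn' : (0 : ℝ) < n := by positivity
  have hl0 : 0 ≤ l := (one_div_pos.2 hn').le.trans hl.le
  have hln : 1 ≤ l * n := by rw [div_lt_iff₀ hn'] at hl; exact hl.le
  have hcast : ((n - 1 : ℕ) : ℝ) = n - 1 := by rw [Nat.cast_sub (by omega), Nat.cast_one]
  rw [Nat.le_div_iff_mul_le (by omega)]
  constructor
  · intro hpay
    by_contra! hlt
    have hS : (S : ℝ) + 1 ≤ x * (n - 1) := by rw [← hcast]; exact_mod_cast hlt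
    exact (public_good_payoff_neg_of_add_one_le_mul hl0 hln (by exact_mod_cast hxH) hrisk
      hS).not_ge hpay
  · intro hle
    have hS : (x : ℝ) * (n - 1) ≤ S := by rw [← hcast]; exact_mod_cast hle
    exact public_good_payoff_nonneg_of_mul_le hl0 hln x.cast_nonneg hS

lemma Finset.sum_comp_update_univ {ι α M : Type*} [Fintype ι] [DecidableEq ι] [AddCommMonoid M]
    (f : α → M) (a : ι → α) (i : ι) (x : α) :
    ∑ j, f (Function.update a i x j) = f x + ∑ j ∈ univ.erase i, f (a j) := by
  simp_rw [Function.apply_update (fun _ => f), sum_update_of_mem (mem_univ i),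
    sdiff_singleton_eq_erase]

section PublicGoodGame

variable {ι : Type*} [Fintype ι] {H : ℕ} {l : ℝ}
  {u : ι → (ι → Fin (H + 1)) → ℝ}

lemma public_good_payoff_update_self [DecidableEq ι]
    (hu : ∀ i a, u i a = l * (∑ j : ι, ((a j : ℕ) : ℝ)) - ((a i : ℕ) : ℝ))
    (a : ι → Fin (H + 1)) (i : ι) (x : Fin (H + 1)) :
    u i (Function.update a i x) =
      l * (((∑ j ∈ Finset.univ.erase i, (a j : ℕ) : ℕ) : ℝ) + (x : ℕ)) - (x : ℕ) := by
  rw [hu, Finset.sum_comp_update_univ (fun y : Fin (H + 1) => ((y : ℕ) : ℝ)),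
    Function.update_self, Nat.cast_sum, add_comm]

lemma public_good_welfare_eq
    (hu : ∀ i a, u i a = l * (∑ j : ι, ((a j : ℕ) : ℝ)) - ((a i : ℕ) : ℝ))
    (b : ι → Fin (H + 1)) :
    ∑ j, u j b = (Fintype.card ι * l - 1) * ∑ j, ((b j : ℕ) : ℝ) := by
  simp only [hu, Finset.sum_sub_distrib, Finset.sum_const, Finset.card_univ, nsmul_eq_mul]
  ring

end PublicGoodGame

theorem stmt18_general {ι : Type*} [Fintype ι] [DecidableEq ι] {H : ℕ}
    (hι : 2 ≤ Fintype.card ι)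
    (l : ℝ) (hl1 : 1 / (Fintype.card ι : ℝ) < l)
    (hl2 : l * ((Fintype.card ι : ℝ) * (H : ℝ) - 1) < (H : ℝ))
    (u : ι → (ι → Fin (H + 1)) → ℝ)
    (hu : ∀ i a, u i a = l * (∑ j : ι, ((a j : ℕ) : ℝ)) - ((a i : ℕ) : ℝ))
    (i : ι) (rstar : (ι → Fin (H + 1)) → Fin (H + 1))
    (hrstar : ∀ a : ι → Fin (H + 1),
      (rstar a : ℕ) = (∑ j ∈ Finset.univ.erase i, (a j : ℕ)) / (Fintype.card ι - 1)) :
    ∀ a : ι → Fin (H + 1),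
      (0 ≤ u i (Function.update a i (rstar a))) ∧
      (∀ x : Fin (H + 1), 0 ≤ u i (Function.update a i x) → x ≤ rstar a) ∧
      (∀ x : Fin (H + 1), 0 ≤ u i (Function.update a i x) →
        ∑ j : ι, u j (Function.update a i x) ≤ ∑ j : ι, u j (Function.update a i (rstar a))) := by
  intro a
  have hsafe : ∀ x : Fin (H + 1), 0 ≤ u i (Function.update a i x) ↔ x ≤ rstar a := fun x => by
    rw [public_good_payoff_update_self hu, Fin.le_def, hrstar,
      public_good_payoff_nonneg_iff_le_div hι hl1 hl2 x.is_le]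
  have hwelfare : ∀ x : Fin (H + 1), ∑ j, u j (Function.update a i x) =
      (Fintype.card ι * l - 1) *
        (((∑ j ∈ Finset.univ.erase i, (a j : ℕ) : ℕ) : ℝ) + (x : ℕ)) := fun x => by
    rw [public_good_welfare_eq hu,
      Finset.sum_comp_update_univ (fun y : Fin (H + 1) => ((y : ℕ) : ℝ)), Nat.cast_sum, add_comm]
  have hwelfare_coeff : 0 ≤ (Fintype.card ι : ℝ) * l - 1 := by
    rw [div_lt_iff₀ (by positivity)] at hl1
    linarith
  refine ⟨(hsafe _).2 le_rfl, fun x hx => (hsafe x).1 hx, fun x hx => ?_⟩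
  rw [hwelfare, hwelfare]
  gcongr
  exact (hsafe x).1 hx

/-- in a high-risk public-good game (`1/n < λ < H/(nH−1)`), the
reaction `R*_i` matching the rounded-down average of the others is, at every
`a_{-i}`, the largest safe action (payoff at least the maxmin payoff 0) and hence
maximizes total welfare subject to safe play. -/
theorem stmt18 {ι : Type*} [Fintype ι] [DecidableEq ι] {H : ℕ}
    (hι : 2 ≤ Fintype.card ι) (hH : 0 < H)
    (l : ℝ) (hl1 : 1 / (Fintype.card ι : ℝ) < l)
    (hl2 : l * ((Fintype.card ι : ℝ) * (H : ℝ) - 1) < (H : ℝ))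
    (u : ι → (ι → Fin (H + 1)) → ℝ)
    (hu : ∀ i a, u i a = l * (∑ j : ι, ((a j : ℕ) : ℝ)) - ((a i : ℕ) : ℝ))
    (i : ι) (rstar : (ι → Fin (H + 1)) → Fin (H + 1))
    (hrstar : ∀ a : ι → Fin (H + 1),
      (rstar a : ℕ) = (∑ j ∈ Finset.univ.erase i, (a j : ℕ)) / (Fintype.card ι - 1)) :
    ∀ a : ι → Fin (H + 1),
      (0 ≤ u i (Function.update a i (rstar a))) ∧
      (∀ x : Fin (H + 1), 0 ≤ u i (Function.update a i x) → x ≤ rstar a) ∧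
      (∀ x : Fin (H + 1), 0 ≤ u i (Function.update a i x) →
        ∑ j : ι, u j (Function.update a i x) ≤ ∑ j : ι, u j (Function.update a i (rstar a))) :=
  stmt18_general hι l hl1 hl2 u hu i rstar hrstar
end

section
/- Let a player's payoff u_i : A → ℝ on A = ∏_j {0,…,H} be non-decreasing in each a_j for j ≠ i, let BR_i be a monotone selection of best replies, and suppose for each outcome a, a_i > BR_i(a_{-i}) implies u_i(a) ≤ u_i(0,…,0). Then BR_i is weakly dominant against monotone play: for all reaction functions R'_i and all monotone profiles R_{-i} of the other players, U_i(BR_i, R_{-i}) ≥ U_i(R'_i, R_{-i}). -/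
/-!
Every executable outcome `a` of a deviation is dominated, for player `i`, by a fixed point of
the profile in which `i` plays `br`. If `a i ≤ br a`, then `a` lies below its own image under
the monotone joint reaction map, so by Knaster–Tarski there is a fixed point `b ≥ a`; since
`u i` grows in the others' actions and `br b = b i` is a best reply, `u i a ≤ u i b`. If `a`
overshoots, `u i a ≤ u i ⊥`, and the same argument runs from the bottom outcome `⊥`.
-/

open Function

theorem le_of_le_of_eqOn_compl {ι : Type*} [Finite ι] [DecidableEq ι] {α : ι → Type*}
    [∀ j, Preorder (α j)] {β : Type*} [Preorder β] (f : (∀ j, α j) → β) (s : Set ι)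
    (hf : ∀ a, ∀ j ∈ s, ∀ x, a j ≤ x → f a ≤ f (update a j x))
    {p q : ∀ j, α j} (hpq : p ≤ q) (hs : ∀ j ∉ s, p j = q j) : f p ≤ f q := by
  suffices key : ∀ t : Finset ι, ↑t ⊆ s → ∀ p ≤ q, (∀ j ∉ t, p j = q j) → f p ≤ f q from
    key s.toFinite.toFinset (by simp) p hpq fun j hj => hs j (by simpa using hj)
  intro t
  induction t using Finset.induction_on with
  | empty =>
    intro _ p _ hpq_out
    rw [funext fun j => hpq_out j (Finset.notMem_empty j)]
  | insert j t _ ih =>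
    intro hts p hpq hpq_out
    have hupd_le : update p j (q j) ≤ q := by
      intro k
      rcases eq_or_ne k j with rfl | hkj
      · simp
      · simpa [update_of_ne hkj] using hpq k
    calc f p ≤ f (update p j (q j)) := hf p j (hts (Finset.mem_insert_self j t)) _ (hpq j)
      _ ≤ f q := ih ((Finset.coe_subset.mpr (Finset.subset_insert j t)).trans hts) _ hupd_le
          fun k hk => by
            rcases eq_or_ne k j with rfl | hkj
            · simp
            · simpa [update_of_ne hkj] using hpq_out k (by simp [hkj, hk])

section ReactionGame

variable {ι : Type*} {α : Type*}

theorem exists_mem_fixedPts_ge [CompleteLattice α] {R : ι → (ι → α) → α}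
    (hR : ∀ j, Monotone (R j)) {c : ι → α} (hc : ∀ j, c j ≤ R j c) :
    ∃ b ∈ FixedPts R, c ≤ b := by
  let T : (ι → α) →o (ι → α) := ⟨fun a j => R j a, fun _ _ hab j => hR j hab⟩
  exact ⟨T.nextFixed c hc, fun j => congrFun (T.nextFixed c hc).2 j, T.le_nextFixed hc⟩

theorem upay_le_upay_of_forall_exists (u : ι → (ι → α) → ℝ) (i : ι)
    {R R' : ι → (ι → α) → α}
    (h : ∀ a ∈ FixedPts R, ∃ b ∈ FixedPts R', u i a ≤ u i b) :
    Upay u R i ≤ Upay u R' i := by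
  refine sSup_le_sSup_of_isCofinalFor ?_
  rintro _ ⟨a, ha, rfl⟩
  obtain ⟨b, hb, hab⟩ := h a ha
  exact ⟨_, ⟨b, hb, rfl⟩, EReal.coe_le_coe_iff.mpr hab⟩

theorem payoff_le_of_forall_ne_le [Finite ι] [DecidableEq ι] [Preorder α]
    (u : ι → (ι → α) → ℝ) (i : ι)
    (hmono_others : ∀ (a : ι → α) (j : ι), j ≠ i → ∀ x, a j ≤ x → u i a ≤ u i (update a j x))
    {br : (ι → α) → α} (hbr_best : ∀ a x, u i (update a i x) ≤ u i (update a i (br a)))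
    {b : ι → α} (hb : br b = b i) {c : ι → α} (hcb : ∀ j ≠ i, c j ≤ b j) : u i c ≤ u i b := by
  have hc_le : c ≤ update b i (c i) := by
    intro j
    rcases eq_or_ne j i with rfl | hji
    · simp
    · simpa [update_of_ne hji] using hcb j hji
  calc u i c ≤ u i (update b i (c i)) :=
        le_of_le_of_eqOn_compl (u i) {i}ᶜ hmono_others hc_le fun j hj => by simp_all
    _ ≤ u i (update b i (br b)) := hbr_best b (c i)
    _ = u i b := by rw [hb, update_eq_self]

theorem exists_mem_fixedPts_update_payoff_ge [Finite ι] [DecidableEq ι] [CompleteLinearOrder α]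
    (u : ι → (ι → α) → ℝ) (i : ι)
    (hmono_others : ∀ (a : ι → α) (j : ι), j ≠ i → ∀ x, a j ≤ x → u i a ≤ u i (update a j x))
    {br : (ι → α) → α} (hbr_mono : Monotone br)
    (hbr_best : ∀ a x, u i (update a i x) ≤ u i (update a i (br a)))
    (hover : ∀ a, br a < a i → u i a ≤ u i ⊥)
    {R : ι → (ι → α) → α} (hR : ∀ j ≠ i, Monotone (R j))
    {r' : (ι → α) → α} {a : ι → α} (ha : a ∈ FixedPts (update R i r')) :
    ∃ b ∈ FixedPts (update R i br), u i a ≤ u i b := by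
  have hmono : ∀ j, Monotone (update R i br j) := by
    intro j
    rcases eq_or_ne j i with rfl | hji
    · simpa using hbr_mono
    · simpa [update_of_ne hji] using hR j hji
  have dominated : ∀ c, c i ≤ br c → (∀ j ≠ i, c j ≤ R j c) →
      ∃ b ∈ FixedPts (update R i br), u i c ≤ u i b := by
    intro c hci hcj
    obtain ⟨b, hb, hcb⟩ := exists_mem_fixedPts_ge hmono (c := c) fun j => by
      rcases eq_or_ne j i with rfl | hji
      · simpa using hci
      · simpa [update_of_ne hji] using hcj j hji
    exact ⟨b, hb, payoff_le_of_forall_ne_le u i hmono_others hbr_best (by simpa using hb i)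
      fun j _ => hcb j⟩
  rcases le_or_gt (a i) (br a) with hle | hgt
  · exact dominated a hle fun j hj => by simpa [update_of_ne hj] using (ha j).ge
  · obtain ⟨b, hb, hb_ge⟩ := dominated ⊥ bot_le fun _ _ => bot_le
    exact ⟨b, hb, (hover a hgt).trans hb_ge⟩

end ReactionGame

theorem stmt19_general {ι : Type*} [Fintype ι] [DecidableEq ι] {H : ℕ}
    (u : ι → (ι → Fin (H + 1)) → ℝ) (i : ι)
    (hmono_others : ∀ (a : ι → Fin (H + 1)) (j : ι), j ≠ i →
      ∀ x : Fin (H + 1), a j ≤ x → u i a ≤ u i (Function.update a j x))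
    (br : (ι → Fin (H + 1)) → Fin (H + 1))
    (hbr_mono : Monotone br)
    (hbr_best : ∀ (a : ι → Fin (H + 1)) (x : Fin (H + 1)),
      u i (Function.update a i x) ≤ u i (Function.update a i (br a)))
    (hover : ∀ a : ι → Fin (H + 1), br a < a i → u i a ≤ u i (fun _ => 0))
    (R : ∀ _ : ι, (ι → Fin (H + 1)) → Fin (H + 1))
    (hR : ∀ j, j ≠ i → IndepOf j (R j) ∧ Monotone (R j))
    (r' : (ι → Fin (H + 1)) → Fin (H + 1)) :
    Upay u (Function.update R i r') i ≤ Upay u (Function.update R i br) i :=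
  upay_le_upay_of_forall_exists u i fun _ ha =>
    exists_mem_fixedPts_update_payoff_ge u i hmono_others hbr_mono hbr_best hover
      (fun j hj => (hR j hj).2) ha

/-- if player `i`'s payoff is non-decreasing in the others' actions,
`br` is a monotone selection of best replies, and overshooting the best reply is
never better than the all-zero outcome, then `br` is weakly dominant against
monotone play. -/
theorem stmt19 {ι : Type*} [Fintype ι] [DecidableEq ι] {H : ℕ}
    (u : ι → (ι → Fin (H + 1)) → ℝ) (i : ι)
    (hmono_others : ∀ (a : ι → Fin (H + 1)) (j : ι), j ≠ i →
      ∀ x : Fin (H + 1), a j ≤ x → u i a ≤ u i (Function.update a j x))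
    (br : (ι → Fin (H + 1)) → Fin (H + 1))
    (hbr_ind : IndepOf i br) (hbr_mono : Monotone br)
    (hbr_best : ∀ (a : ι → Fin (H + 1)) (x : Fin (H + 1)),
      u i (Function.update a i x) ≤ u i (Function.update a i (br a)))
    (hover : ∀ a : ι → Fin (H + 1), br a < a i → u i a ≤ u i (fun _ => 0))
    (R : ∀ _ : ι, (ι → Fin (H + 1)) → Fin (H + 1))
    (hR : ∀ j, j ≠ i → IndepOf j (R j) ∧ Monotone (R j))
    (r' : (ι → Fin (H + 1)) → Fin (H + 1)) (hr' : IndepOf i r') :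
    Upay u (Function.update R i r') i ≤ Upay u (Function.update R i br) i :=
  stmt19_general u i hmono_others br hbr_mono hbr_best hover R hR r'
end
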